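/- There exist C > 0 and ε₀ > 0 such that for all ε ∈ (0, ε₀), all ξ ∈ [−ξ₁, ξ₂], and all θ ∈ [√ε, π]: μ_ε·μ₁·𝓘₁(−ξ,θ;2ξ₁) ≥ C·θ²/(ε·|ln ε|). -/
import Mathlib


open Real

noncomputable section

/-- The distance parameter `a_ε`. -/
def aEps (r₁ r₂ ε : ℝ) : ℝ :=
  Real.sqrt ε * Real.sqrt ((2*r₁+ε)*(2*r₂+ε)*(2*r₁+2*r₂+ε)) / (2*(r₁+r₂+ε))

def xi (r : ℝ) (r₁ r₂ ε : ℝ) : ℝ := Real.arsinh (aEps r₁ r₂ ε / r)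

def sZero (r₁ r₂ ε : ℝ) : ℝ := xi r₁ r₁ r₂ ε + xi r₂ r₁ r₂ ε

/-- `w θ ξ = √(cosh ξ − cos θ)`. -/
def w (θ ξ : ℝ) : ℝ := Real.sqrt (Real.cosh ξ - Real.cos θ)

/-- The digamma value `ψ₀(z) = −γ + ∑_{k≥0} (z−1)/((k+1)(k+z))`. -/
def digammaVal (z : ℝ) : ℝ :=
  -Real.eulerMascheroniConstant + ∑' k : ℕ, (z - 1) / ((k + 1) * (k + z))

def rTilde (r₁ r₂ : ℝ) : ℝ := r₁ * r₂ / (r₁ + r₂)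

/-- `μ_j` for `j = 1, 2`. -/
def muConst (r₁ r₂ : ℝ) (j : ℕ) : ℝ :=
  (digammaVal ((if j = 1 then r₁ else r₂) / (r₁ + r₂)) + Real.eulerMascheroniConstant) /
    (digammaVal (r₁ / (r₁ + r₂)) + digammaVal (r₂ / (r₁ + r₂)) +
      2 * Real.eulerMascheroniConstant)

/-- `μ_ε`. -/
def muEps (r₁ r₂ ε : ℝ) : ℝ :=
  (1 / (2 * Real.pi * rTilde r₁ r₂)) *
    (|Real.log ε| + Real.log (rTilde r₁ r₂) + Real.log 2 -
      2 * (digammaVal (r₁ / (r₁ + r₂)) * digammaVal (r₂ / (r₁ + r₂)) -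
          Real.eulerMascheroniConstant ^ 2) /
        (digammaVal (r₁ / (r₁ + r₂)) + digammaVal (r₂ / (r₁ + r₂)) +
          2 * Real.eulerMascheroniConstant))⁻¹

/-- `𝓘₁(ξ,θ;c) = (1/(2 a_ε s₀)) · w_θ(ξ)³ / w_θ(ξ−c)`. -/
def I1 (r₁ r₂ ε ξ θ c : ℝ) : ℝ :=
  (1 / (2 * aEps r₁ r₂ ε * sZero r₁ r₂ ε)) * w θ ξ ^ 3 / w θ (ξ - c)

/-- The blow-up factor `q_h(ξ,θ)`. -/
def qh (r₁ r₂ ε ξ θ : ℝ) : ℝ :=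
  muEps r₁ r₂ ε * muConst r₁ r₂ 1 *
      (I1 r₁ r₂ ε (-ξ) θ (2 * xi r₁ r₁ r₂ ε) +
        I1 r₁ r₂ ε ξ θ (2 * xi r₁ r₁ r₂ ε + 2 * xi r₂ r₁ r₂ ε)) +
    muEps r₁ r₂ ε * muConst r₁ r₂ 2 *
      (I1 r₁ r₂ ε ξ θ (2 * xi r₂ r₁ r₂ ε) +
        I1 r₁ r₂ ε (-ξ) θ (2 * xi r₁ r₁ r₂ ε + 2 * xi r₂ r₁ r₂ ε))

/- ### Auxiliary lemmas -/

lemma my_arsinh_le_self {x : ℝ} (hx : 0 ≤ x) : Real.arsinh x ≤ x := by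
  rcases eq_or_lt_of_le hx with h | h
  · simp [← h]
  · exact (Real.arsinh_le_arsinh.mpr (Real.self_le_sinh_iff.mpr hx)).trans_eq
      (Real.arsinh_sinh x)

lemma my_cosh_le {x : ℝ} (hx : x ^ 2 ≤ 1) : Real.cosh x ≤ 1 + x ^ 2 := by
  have h1 := Real.cosh_le_exp_half_sq x
  set t := x ^ 2 / 2 with ht
  have ht0 : 0 ≤ t := by positivity
  have ht1 : t ≤ 1 / 2 := by simp only [ht]; linarith
  have h2 : -t + 1 ≤ exp (-t) := Real.add_one_le_exp (-t)
  have h3 : exp (-t) * exp t = 1 := by rw [← Real.exp_add]; simp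
  have h5 : exp (1/2 : ℝ) < 2 := by
    nlinarith [Real.exp_one_lt_d9, Real.exp_pos (1/2 : ℝ),
      (Real.exp_add (1/2) (1/2)).symm.trans (by norm_num : Real.exp ((1:ℝ)/2 + 1/2) = Real.exp 1)]
  have h4 : exp t ≤ 2 := (Real.exp_le_exp.mpr ht1).trans h5.le
  nlinarith [Real.exp_pos t, Real.exp_pos (-t)]

lemma my_summable {z : ℝ} (hz : 0 < z) (hz1 : z ≤ 1) :
    Summable (fun k : ℕ => (z - 1) / ((k + 1) * (k + z))) := by
  have hbase : Summable (fun k : ℕ => z⁻¹ * (1 / ((k : ℝ) + 1) ^ 2)) := by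
    apply Summable.mul_left
    have := (summable_nat_add_iff (f := fun n : ℕ => 1 / (n : ℝ) ^ 2) 1).mpr
      (Real.summable_one_div_nat_pow.mpr one_lt_two)
    simpa using this
  have hs : Summable (fun k : ℕ => (((k : ℝ) + 1) * ((k : ℝ) + z))⁻¹) := by
    apply Summable.of_nonneg_of_le (fun k => by positivity) _ hbase
    intro k
    have hk : (0:ℝ) ≤ k := Nat.cast_nonneg k
    rw [inv_le_iff_one_le_mul₀ (by positivity)]
    have h1 : z * ((k:ℝ) + 1) ^ 2 ≤ ((k:ℝ) + 1) * ((k:ℝ) + z) := by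
      nlinarith [mul_nonneg hk (sub_nonneg.mpr hz1)]
    calc (1:ℝ) = z⁻¹ * (1 / ((k:ℝ)+1)^2) * (z * ((k:ℝ)+1)^2) := by
          field_simp
      _ ≤ z⁻¹ * (1 / ((k:ℝ)+1)^2) * (((k:ℝ) + 1) * ((k:ℝ) + z)) := by
          apply mul_le_mul_of_nonneg_left h1 (by positivity)
  have := hs.mul_left (z - 1)
  apply this.congr
  intro k
  rw [mul_inv_eq_iff_eq_mul₀ (by positivity), div_mul_eq_mul_div, mul_div_assoc]
  rw [div_self (by positivity), mul_one]

lemma my_tsum_neg {z : ℝ} (hz : 0 < z) (hz1 : z < 1) :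
    ∑' k : ℕ, (z - 1) / ((k + 1) * (k + z)) < 0 := by
  have hs := my_summable hz hz1.le
  have h := Summable.tsum_lt_tsum (f := fun k : ℕ => (z - 1) / ((k + 1) * (k + z)))
    (g := fun _ : ℕ => (0:ℝ)) (i := 0)
    (fun k => div_nonpos_of_nonpos_of_nonneg (by linarith) (by positivity))
    (by
      simp only [Nat.cast_zero, zero_add, one_mul]
      exact div_neg_of_neg_of_pos (by linarith) hz)
    hs summable_zero
  simpa using h

lemma my_digamma_neg {z : ℝ} (hz : 0 < z) (hz1 : z < 1) :
    digammaVal z + Real.eulerMascheroniConstant < 0 := by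
  unfold digammaVal
  have := my_tsum_neg hz hz1
  linarith

set_option maxHeartbeats 1000000 in
theorem stmt15 (r₁ r₂ : ℝ) (hr₁ : 0 < r₁) (hr₂ : 0 < r₂) :
    ∃ C > 0, ∃ ε₀ > 0, ∀ ε ∈ Set.Ioo 0 ε₀,
      ∀ ξ ∈ Set.Icc (-(xi r₁ r₁ r₂ ε)) (xi r₂ r₁ r₂ ε),
        ∀ θ ∈ Set.Icc (Real.sqrt ε) Real.pi,
          C * θ ^ 2 / (ε * |Real.log ε|) ≤
            muEps r₁ r₂ ε * muConst r₁ r₂ 1 *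
              I1 r₁ r₂ ε (-ξ) θ (2 * xi r₁ r₁ r₂ ε) := by
  have hpi := Real.pi_pos
  have hr12 : 0 < r₁ + r₂ := by linarith
  -- digamma constants
  have hz1 : (0:ℝ) < r₁ / (r₁ + r₂) := by positivity
  have hz1' : r₁ / (r₁ + r₂) < 1 := by rw [div_lt_one hr12]; linarith
  have hz2 : (0:ℝ) < r₂ / (r₁ + r₂) := by positivity
  have hz2' : r₂ / (r₁ + r₂) < 1 := by rw [div_lt_one hr12]; linarith
  have hN1 := my_digamma_neg hz1 hz1'
  have hN2 := my_digamma_neg hz2 hz2'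
  have hD : digammaVal (r₁/(r₁+r₂)) + digammaVal (r₂/(r₁+r₂)) +
      2 * Real.eulerMascheroniConstant < 0 := by linarith
  have hmu1 : 0 < muConst r₁ r₂ 1 := by
    unfold muConst
    rw [if_pos rfl]
    exact div_pos_of_neg_of_neg hN1 hD
  -- constants
  have hrt : 0 < rTilde r₁ r₂ := div_pos (mul_pos hr₁ hr₂) hr12
  set P1 : ℝ := (2*r₁+1)*(2*r₂+1)*(2*r₁+2*r₂+1) with hP1def
  have hP1 : 0 < P1 := by rw [hP1def]; positivity
  set A : ℝ := Real.sqrt P1 / (2*(r₁+r₂)) with hAdef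
  have hA : 0 < A := div_pos (Real.sqrt_pos.mpr hP1) (by linarith)
  set m : ℝ := min r₁ r₂ with hmdef
  have hm : 0 < m := lt_min hr₁ hr₂
  set K₁ : ℝ := 2*A^2*(1/r₁+1/r₂) with hK₁def
  have hK₁ : 0 < K₁ := by rw [hK₁def]; positivity
  set K₂ : ℝ := 9*A^2/m^2 with hK₂def
  have hK₂ : 0 < K₂ := by rw [hK₂def]; positivity
  set K₃ : ℝ := 1 + K₂*Real.pi^2/2 with hK₃def
  have hK₃ : 0 < K₃ := by rw [hK₃def]; positivity
  have hsK₃ : 0 < Real.sqrt K₃ := Real.sqrt_pos.mpr hK₃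
  set K₀ : ℝ := Real.log (rTilde r₁ r₂) + Real.log 2 -
      2 * (digammaVal (r₁ / (r₁ + r₂)) * digammaVal (r₂ / (r₁ + r₂)) -
          Real.eulerMascheroniConstant ^ 2) /
        (digammaVal (r₁ / (r₁ + r₂)) + digammaVal (r₂ / (r₁ + r₂)) +
          2 * Real.eulerMascheroniConstant) with hK₀def
  have hmuEq : ∀ ε' : ℝ, muEps r₁ r₂ ε' =
      (1 / (2 * Real.pi * rTilde r₁ r₂)) * (|Real.log ε'| + K₀)⁻¹ := by
    intro ε'
    unfold muEps
    rw [hK₀def]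
    ring_nf
  set C : ℝ := muConst r₁ r₂ 1 * (2/Real.pi^2) /
      (4*Real.pi*rTilde r₁ r₂*K₁*Real.sqrt K₃) with hCdef
  have hC : 0 < C := by
    rw [hCdef]
    apply div_pos (mul_pos hmu1 (by positivity)) (by positivity)
  refine ⟨C, hC, min 1 (min (m^2/(9*A^2)) (Real.exp (-(2*|K₀|+1)))), by positivity, ?_⟩
  rintro ε ⟨hε0, hεlt⟩ ξ ⟨hξl, hξu⟩ θ ⟨hθl, hθu⟩
  have hε1 : ε ≤ 1 := (lt_of_lt_of_le hεlt (min_le_left _ _)).le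
  have hεm : ε ≤ m^2/(9*A^2) :=
    (lt_of_lt_of_le hεlt ((min_le_right _ _).trans (min_le_left _ _))).le
  have hεe : ε < Real.exp (-(2*|K₀|+1)) :=
    lt_of_lt_of_le hεlt ((min_le_right _ _).trans (min_le_right _ _))
  -- log bounds
  have hlogε : Real.log ε < -(2*|K₀|+1) := by
    have := Real.log_lt_log hε0 hεe
    rwa [Real.log_exp] at this
  have hlogneg : Real.log ε < 0 := by
    have := abs_nonneg K₀; linarith
  have habs : |Real.log ε| = -Real.log ε := abs_of_neg hlogneg
  have hlabs : 2*|K₀|+1 ≤ |Real.log ε| := by rw [habs]; linarith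
  have hl1 : 1 ≤ |Real.log ε| := by have := abs_nonneg K₀; linarith
  have hlpos : 0 < |Real.log ε| := by linarith
  -- muEps lower bound
  have hK₀abs : |K₀| ≤ |Real.log ε| := by have := abs_nonneg K₀; linarith
  have hBpos : 0 < |Real.log ε| + K₀ := by
    have h1 : -|K₀| ≤ K₀ := neg_abs_le K₀
    linarith
  have hBle : |Real.log ε| + K₀ ≤ 2*|Real.log ε| := by
    have h1 : K₀ ≤ |K₀| := le_abs_self K₀
    linarith
  have hmuEps : 1/(4*Real.pi*rTilde r₁ r₂*|Real.log ε|) ≤ muEps r₁ r₂ ε := by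
    rw [hmuEq ε]
    have hinv : (2*|Real.log ε|)⁻¹ ≤ (|Real.log ε| + K₀)⁻¹ :=
      inv_anti₀ hBpos hBle
    calc 1/(4*Real.pi*rTilde r₁ r₂*|Real.log ε|)
        = (1 / (2 * Real.pi * rTilde r₁ r₂)) * (2*|Real.log ε|)⁻¹ := by
          field_simp
          ring
      _ ≤ (1 / (2 * Real.pi * rTilde r₁ r₂)) * (|Real.log ε| + K₀)⁻¹ := by
          apply mul_le_mul_of_nonneg_left hinv (by positivity)
  -- aEps bounds
  set a : ℝ := aEps r₁ r₂ ε with hadef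
  have hProd : 0 < (2*r₁+ε)*(2*r₂+ε)*(2*r₁+2*r₂+ε) := by positivity
  have ha0 : 0 < a := by
    rw [hadef]; unfold aEps
    exact div_pos (mul_pos (Real.sqrt_pos.mpr hε0) (Real.sqrt_pos.mpr hProd)) (by linarith)
  have haA : a ≤ A * Real.sqrt ε := by
    have hPle : (2*r₁+ε)*(2*r₂+ε)*(2*r₁+2*r₂+ε) ≤ P1 := by
      rw [hP1def]
      apply mul_le_mul (mul_le_mul (by linarith) (by linarith) (by linarith) (by linarith))
        (by linarith) (by linarith) (by positivity)
    have h1 : Real.sqrt ((2*r₁+ε)*(2*r₂+ε)*(2*r₁+2*r₂+ε)) ≤ Real.sqrt P1 :=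
      Real.sqrt_le_sqrt hPle
    have h2 : a ≤ Real.sqrt ε * Real.sqrt P1 / (2*(r₁+r₂)) := by
      rw [hadef]; unfold aEps
      apply div_le_div₀ (by positivity)
        (mul_le_mul_of_nonneg_left h1 (Real.sqrt_nonneg ε)) (by linarith) (by linarith)
    calc a ≤ Real.sqrt ε * Real.sqrt P1 / (2*(r₁+r₂)) := h2
      _ = A * Real.sqrt ε := by rw [hAdef]; ring
  have ha2 : a^2 ≤ A^2 * ε := by
    calc a^2 = a*a := sq a
      _ ≤ (A*Real.sqrt ε)*(A*Real.sqrt ε) := mul_self_le_mul_self ha0.le haA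
      _ = A^2 * (Real.sqrt ε * Real.sqrt ε) := by ring
      _ = A^2 * ε := by rw [Real.mul_self_sqrt hε0.le]
  -- xi bounds
  set x1 : ℝ := xi r₁ r₁ r₂ ε with hx1def
  set x2 : ℝ := xi r₂ r₁ r₂ ε with hx2def
  have hx1pos : 0 < x1 := by
    rw [hx1def]; unfold xi
    rw [Real.arsinh_pos_iff]
    rw [← hadef]; positivity
  have hx2pos : 0 < x2 := by
    rw [hx2def]; unfold xi
    rw [Real.arsinh_pos_iff]
    rw [← hadef]; positivity
  have hx1le : x1 ≤ a / r₁ := by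
    rw [hx1def]; unfold xi; rw [← hadef]
    exact my_arsinh_le_self (by positivity)
  have hx2le : x2 ≤ a / r₂ := by
    rw [hx2def]; unfold xi; rw [← hadef]
    exact my_arsinh_le_self (by positivity)
  have hx1le' : x1 * r₁ ≤ a := by rwa [← le_div_iff₀ hr₁]
  have hx2le' : x2 * r₂ ≤ a := by rwa [← le_div_iff₀ hr₂]
  have hs0eq : sZero r₁ r₂ ε = x1 + x2 := by
    rw [hx1def, hx2def]; rfl
  have hs0pos : 0 < sZero r₁ r₂ ε := by rw [hs0eq]; linarith
  -- 2 a s₀ ≤ K₁ ε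
  have h2as : 2 * a * sZero r₁ r₂ ε ≤ K₁ * ε := by
    rw [hs0eq]
    have h1 : a * x1 ≤ a^2 / r₁ := by
      calc a * x1 ≤ a * (a / r₁) := mul_le_mul_of_nonneg_left hx1le ha0.le
        _ = a^2 / r₁ := by ring
    have h2 : a * x2 ≤ a^2 / r₂ := by
      calc a * x2 ≤ a * (a / r₂) := mul_le_mul_of_nonneg_left hx2le ha0.le
        _ = a^2 / r₂ := by ring
    have h3 : a^2 / r₁ ≤ A^2 * ε / r₁ := by
      apply div_le_div_of_nonneg_right ha2 hr₁.le
    have h4 : a^2 / r₂ ≤ A^2 * ε / r₂ := by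
      apply div_le_div_of_nonneg_right ha2 hr₂.le
    have h5 : K₁ * ε = 2 * (A^2 * ε / r₁) + 2 * (A^2 * ε / r₂) := by
      rw [hK₁def]; field_simp
    linarith
  -- θ facts
  have hθpos : 0 < θ := lt_of_lt_of_le (Real.sqrt_pos.mpr hε0) hθl
  have hεθ2 : ε ≤ θ^2 := by
    calc ε = Real.sqrt ε * Real.sqrt ε := (Real.mul_self_sqrt hε0.le).symm
      _ ≤ θ * θ := mul_self_le_mul_self (Real.sqrt_nonneg ε) hθl
      _ = θ^2 := (sq θ).symm
  have hJ : Real.cos θ ≤ 1 - 2/Real.pi^2 * θ^2 :=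
    Real.cos_le_one_sub_mul_cos_sq (by rw [abs_of_pos hθpos]; exact hθu)
  set L : ℝ := 1 - Real.cos θ with hLdef
  have hJ' : 2/Real.pi^2 * θ^2 ≤ L := by rw [hLdef]; linarith
  have hLpos : 0 < L := lt_of_lt_of_le (by positivity) hJ'
  have hsLpos : 0 < Real.sqrt L := Real.sqrt_pos.mpr hLpos
  -- numerator bound
  have hnum : L * Real.sqrt L ≤ Real.sqrt (Real.cosh (-ξ) - Real.cos θ) ^ 3 := by
    have h1 : Real.sqrt L ≤ Real.sqrt (Real.cosh (-ξ) - Real.cos θ) := by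
      apply Real.sqrt_le_sqrt
      have := Real.one_le_cosh (-ξ)
      rw [hLdef]; linarith
    have h2 : Real.sqrt L ^ 3 = L * Real.sqrt L := by
      rw [pow_succ, Real.sq_sqrt hLpos.le]
    rw [← h2]
    exact pow_le_pow_left₀ (Real.sqrt_nonneg L) h1 3
  -- denominator bound
  have hζsq' : (-ξ - 2*x1)^2 ≤ (2*x1+x2)^2 :=
    sq_le_sq' (by linarith) (by linarith)
  have hmx1 : m * x1 ≤ a := by
    calc m * x1 ≤ r₁ * x1 := mul_le_mul_of_nonneg_right (min_le_left r₁ r₂) hx1pos.le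
      _ = x1 * r₁ := mul_comm _ _
      _ ≤ a := hx1le'
  have hmx2 : m * x2 ≤ a := by
    calc m * x2 ≤ r₂ * x2 := mul_le_mul_of_nonneg_right (min_le_right r₁ r₂) hx2pos.le
      _ = x2 * r₂ := mul_comm _ _
      _ ≤ a := hx2le'
  have hstep : m * (2*x1+x2) ≤ 3*a := by
    calc m * (2*x1+x2) = 2*(m*x1) + m*x2 := by ring
      _ ≤ 3*a := by linarith
  have hζm : (-ξ - 2*x1)^2 * m^2 ≤ 9 * a^2 := by
    calc (-ξ - 2*x1)^2 * m^2 ≤ (2*x1+x2)^2 * m^2 :=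
          mul_le_mul_of_nonneg_right hζsq' (sq_nonneg m)
      _ = (m*(2*x1+x2)) * (m*(2*x1+x2)) := by ring
      _ ≤ (3*a) * (3*a) :=
          mul_self_le_mul_self (mul_nonneg hm.le (by linarith)) hstep
      _ = 9 * a^2 := by ring
  have hζK : (-ξ - 2*x1)^2 ≤ K₂ * ε := by
    rw [hK₂def, div_mul_eq_mul_div, le_div_iff₀ (by positivity : (0:ℝ) < m^2)]
    linarith [hζm, ha2]
  have hζ1 : (-ξ - 2*x1)^2 ≤ 1 := by
    have h1 : K₂ * ε ≤ K₂ * (m^2/(9*A^2)) := mul_le_mul_of_nonneg_left hεm hK₂.le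
    have h2 : K₂ * (m^2/(9*A^2)) = 1 := by
      rw [hK₂def]; field_simp
    linarith
  have hcosh : Real.cosh (-ξ - 2*x1) ≤ 1 + K₂ * ε := by
    have := my_cosh_le hζ1
    linarith
  have hθ2L : θ^2 ≤ Real.pi^2/2 * L := by
    have h1 := mul_le_mul_of_nonneg_left hJ' (by positivity : (0:ℝ) ≤ Real.pi^2/2)
    have h2 : Real.pi^2/2 * (2/Real.pi^2 * θ^2) = θ^2 := by
      field_simp
    linarith
  have hup : Real.cosh (-ξ - 2*x1) - Real.cos θ ≤ K₃ * L := by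
    have h1 : K₂ * ε ≤ K₂ * θ^2 := mul_le_mul_of_nonneg_left hεθ2 hK₂.le
    have h2 : K₂ * θ^2 ≤ K₂ * (Real.pi^2/2 * L) := mul_le_mul_of_nonneg_left hθ2L hK₂.le
    rw [hK₃def, hLdef]
    rw [hLdef] at h2
    linarith [hcosh, h1, h2]
  have hden : Real.sqrt (Real.cosh (-ξ - 2*x1) - Real.cos θ) ≤ Real.sqrt K₃ * Real.sqrt L := by
    calc Real.sqrt (Real.cosh (-ξ - 2*x1) - Real.cos θ) ≤ Real.sqrt (K₃ * L) :=
          Real.sqrt_le_sqrt hup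
      _ = Real.sqrt K₃ * Real.sqrt L := Real.sqrt_mul hK₃.le L
  have hdenpos : 0 < Real.sqrt (Real.cosh (-ξ - 2*x1) - Real.cos θ) := by
    apply Real.sqrt_pos.mpr
    have := Real.one_le_cosh (-ξ - 2*x1)
    rw [hLdef] at hLpos
    linarith
  -- I1 lower bound
  have hI1eq : I1 r₁ r₂ ε (-ξ) θ (2 * x1) =
      Real.sqrt (Real.cosh (-ξ) - Real.cos θ) ^ 3 /
        (2 * a * sZero r₁ r₂ ε * Real.sqrt (Real.cosh (-ξ - 2*x1) - Real.cos θ)) := by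
    unfold I1 w
    rw [← hadef]
    ring
  have hI : (2/Real.pi^2) * θ^2 / (K₁ * Real.sqrt K₃ * ε) ≤ I1 r₁ r₂ ε (-ξ) θ (2 * x1) := by
    rw [hI1eq]
    have hstep2 : L * Real.sqrt L / (K₁ * ε * (Real.sqrt K₃ * Real.sqrt L)) ≤
        Real.sqrt (Real.cosh (-ξ) - Real.cos θ) ^ 3 /
          (2 * a * sZero r₁ r₂ ε * Real.sqrt (Real.cosh (-ξ - 2*x1) - Real.cos θ)) := by
      apply div_le_div₀ (by positivity) hnum (by positivity)
      apply mul_le_mul h2as hden hdenpos.le (by positivity)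
    have hsimp : L * Real.sqrt L / (K₁ * ε * (Real.sqrt K₃ * Real.sqrt L)) =
        L / (K₁ * Real.sqrt K₃ * ε) := by
      rw [show K₁ * ε * (Real.sqrt K₃ * Real.sqrt L) =
        K₁ * Real.sqrt K₃ * ε * Real.sqrt L by ring]
      exact mul_div_mul_right _ _ (ne_of_gt hsLpos)
    have hstep1 : (2/Real.pi^2) * θ^2 / (K₁ * Real.sqrt K₃ * ε) ≤
        L / (K₁ * Real.sqrt K₃ * ε) := by
      apply div_le_div_of_nonneg_right ?_ (by positivity)
      · exact hJ'
    calc (2/Real.pi^2) * θ^2 / (K₁ * Real.sqrt K₃ * ε) ≤ L / (K₁ * Real.sqrt K₃ * ε) := hstep1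
      _ = L * Real.sqrt L / (K₁ * ε * (Real.sqrt K₃ * Real.sqrt L)) := hsimp.symm
      _ ≤ _ := hstep2
  -- final assembly
  have hfin : C * θ^2 / (ε * |Real.log ε|) =
      1/(4*Real.pi*rTilde r₁ r₂*|Real.log ε|) * muConst r₁ r₂ 1 *
        ((2/Real.pi^2) * θ^2 / (K₁ * Real.sqrt K₃ * ε)) := by
    rw [hCdef]
    field_simp
  rw [hfin]
  have hMpos : (0:ℝ) < 1/(4*Real.pi*rTilde r₁ r₂*|Real.log ε|) := by positivity
  apply mul_le_mul (mul_le_mul_of_nonneg_right hmuEps hmu1.le) hI (by positivity)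
    (mul_nonneg (le_trans hMpos.le hmuEps) hmu1.le)

end
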